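/- arXiv:0811.1696 — 3 statements merged into one kernel-verified Lean document; each statement's English description precedes it below -/
import Mathlib

section
/- For all s, t ≥ 0, the conditional expectation under Q satisfies E_Q[1/Z_{t+s} | F_t] = (1/Z_t) · P(Z_{t+s} > 0 | F_t), Q-almost surely; here P(Z_{t+s} > 0 | F_t) denotes the conditional probability under P of the event {Z_{t+s} > 0} given F_t. -/
/-! For `A ∈ ℱ t`, both `∫_A Z_{t+s}⁻¹ dQ` and `∫_A Z_t⁻¹ P(Z_{t+s} > 0 | ℱ t) dQ`
equal `P(A ∩ {Z_{t+s} > 0})`. Passing to `P`, each density cancels the inverse in front of it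
up to the indicator of its support. For the second integral this leaves the extra event `{Z_t > 0}`,
which is harmless: `{Z_t = 0}` is `Q`-null, and hence `P(Z_t = 0, Z_{t+s} > 0) = 0`. -/

open MeasureTheory
open scoped NNReal ENNReal

theorem ENNReal.ofReal_mul_ofReal_inv_mul {z : ℝ} (hz : 0 ≤ z) (x : ℝ) :
    ENNReal.ofReal z * ENNReal.ofReal (z⁻¹ * x) = if 0 < z then ENNReal.ofReal x else 0 := by
  rcases hz.eq_or_lt with rfl | hz
  · simp
  · rw [if_pos hz, ← ENNReal.ofReal_mul hz.le, mul_inv_cancel_left₀ hz.ne']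

namespace MeasureTheory

variable {Ω : Type*} {m m₀ : MeasurableSpace Ω} {P Q : Measure Ω}

theorem trim_eq_withDensity_of_density (hm : m ≤ m₀) {ρ : Ω → ℝ≥0∞}
    (hρ : Measurable[m] ρ) (hQ : ∀ A, MeasurableSet[m] A → Q A = ∫⁻ ω in A, ρ ω ∂P) :
    Q.trim hm = (P.trim hm).withDensity ρ := by
  refine @Measure.ext _ m _ _ fun A hA => ?_
  rw [trim_measurableSet_eq hm hA, hQ A hA, withDensity_apply _ hA,
    setLIntegral_trim hm hρ hA]

theorem setLIntegral_eq_setLIntegral_mul_of_density (hm : m ≤ m₀) {ρ : Ω → ℝ≥0∞}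
    (hρ : Measurable[m] ρ) (hQ : ∀ A, MeasurableSet[m] A → Q A = ∫⁻ ω in A, ρ ω ∂P)
    {f : Ω → ℝ≥0∞} (hf : Measurable[m] f) {A : Set Ω} (hA : MeasurableSet[m] A) :
    ∫⁻ ω in A, f ω ∂Q = ∫⁻ ω in A, ρ ω * f ω ∂P :=
  calc ∫⁻ ω in A, f ω ∂Q
    _ = ∫⁻ ω in A, f ω ∂Q.trim hm := (setLIntegral_trim hm hf hA).symm
    _ = ∫⁻ ω in A, (ρ * f) ω ∂P.trim hm := by
      rw [trim_eq_withDensity_of_density hm hρ hQ,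
        setLIntegral_withDensity_eq_setLIntegral_mul _ hρ hf hA]
    _ = ∫⁻ ω in A, ρ ω * f ω ∂P := setLIntegral_trim hm (hρ.mul hf) hA

theorem ae_of_ae_of_density {ρ : Ω → ℝ≥0∞}
    (hQ : ∀ A, MeasurableSet[m] A → Q A = ∫⁻ ω in A, ρ ω ∂P) {p : Ω → Prop}
    (hp : MeasurableSet[m] {ω | p ω}) (h : ∀ᵐ ω ∂P, p ω) : ∀ᵐ ω ∂Q, p ω := by
  rw [ae_iff] at h ⊢
  change P {ω | p ω}ᶜ = 0 at h
  change Q {ω | p ω}ᶜ = 0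
  rw [hQ _ hp.compl, setLIntegral_measure_zero _ _ h]

section RealDensity

variable {Z : Ω → ℝ}

theorem measure_nonpos_eq_zero_of_density (hm : m ≤ m₀) (hZ : Measurable[m] Z)
    (hQ : ∀ A, MeasurableSet[m] A → Q A = ∫⁻ ω in A, ENNReal.ofReal (Z ω) ∂P) :
    Q {ω | Z ω ≤ 0} = 0 := by
  have hA : MeasurableSet[m] {ω | Z ω ≤ 0} := measurableSet_le hZ measurable_const
  rw [hQ _ hA]
  exact setLIntegral_eq_zero (hm _ hA) fun ω hω => ENNReal.ofReal_eq_zero.2 hω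

theorem setLIntegral_ofReal_inv_mul_density (hm : m ≤ m₀) (hZ : Measurable[m] Z)
    (hZ₀ : ∀ ω, 0 ≤ Z ω)
    (hQ : ∀ A, MeasurableSet[m] A → Q A = ∫⁻ ω in A, ENNReal.ofReal (Z ω) ∂P)
    {f : Ω → ℝ} (hf : Measurable[m] f) {A : Set Ω} (hA : MeasurableSet[m] A) :
    ∫⁻ ω in A, ENNReal.ofReal ((Z ω)⁻¹ * f ω) ∂Q =
      ∫⁻ ω in A ∩ {ω | 0 < Z ω}, ENNReal.ofReal (f ω) ∂P := by
  have hpos : MeasurableSet {ω | 0 < Z ω} := hm _ (measurableSet_lt measurable_const hZ)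
  rw [setLIntegral_eq_setLIntegral_mul_of_density hm hZ.ennreal_ofReal hQ
      (f := fun ω => ENNReal.ofReal ((Z ω)⁻¹ * f ω)) (hZ.inv.mul hf).ennreal_ofReal hA,
    Set.inter_comm, ← setLIntegral_indicator hpos]
  simp_rw [ENNReal.ofReal_mul_ofReal_inv_mul (hZ₀ _), Set.indicator_apply]
  rfl

theorem setLIntegral_ofReal_inv_density (hm : m ≤ m₀) (hZ : Measurable[m] Z)
    (hZ₀ : ∀ ω, 0 ≤ Z ω)
    (hQ : ∀ A, MeasurableSet[m] A → Q A = ∫⁻ ω in A, ENNReal.ofReal (Z ω) ∂P)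
    {A : Set Ω} (hA : MeasurableSet[m] A) :
    ∫⁻ ω in A, ENNReal.ofReal (Z ω)⁻¹ ∂Q = P (A ∩ {ω | 0 < Z ω}) := by
  simpa using setLIntegral_ofReal_inv_mul_density hm hZ hZ₀ hQ measurable_const hA (f := 1)

end RealDensity

theorem setLIntegral_ofReal_condExp_indicator [IsFiniteMeasure P] (hm : m ≤ m₀)
    {T : Set Ω} (hT : MeasurableSet T) {A : Set Ω} (hA : MeasurableSet[m] A) :
    ∫⁻ ω in A, ENNReal.ofReal (P[T.indicator (fun _ => (1 : ℝ)) | m] ω) ∂P =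
      P (A ∩ T) := by
  have hT₁ : Integrable (T.indicator fun _ => (1 : ℝ)) P := (integrable_const 1).indicator hT
  have hcond₀ : 0 ≤ᵐ[P.restrict A] P[T.indicator (fun _ => (1 : ℝ)) | m] :=
    ae_restrict_of_ae <|
      condExp_nonneg (ae_of_all _ (Set.indicator_nonneg fun _ _ => zero_le_one))
  rw [← ofReal_integral_eq_lintegral_ofReal integrable_condExp.integrableOn hcond₀,
    setIntegral_condExp hm hT₁ hA, setIntegral_indicator hT]
  simp

theorem measure_nonpos_inter_pos_eq_zero_of_density {m' : MeasurableSpace Ω}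
    (hm : m ≤ m') (hm' : m' ≤ m₀) {Z Z' : Ω → ℝ} (hZ : Measurable[m] Z)
    (hZ' : Measurable[m'] Z') (hZ'₀ : ∀ ω, 0 ≤ Z' ω)
    (hQ : ∀ A, MeasurableSet[m] A → Q A = ∫⁻ ω in A, ENNReal.ofReal (Z ω) ∂P)
    (hQ' : ∀ A, MeasurableSet[m'] A → Q A = ∫⁻ ω in A, ENNReal.ofReal (Z' ω) ∂P) :
    P ({ω | Z ω ≤ 0} ∩ {ω | 0 < Z' ω}) = 0 := by
  rw [← setLIntegral_ofReal_inv_density hm' hZ' hZ'₀ hQ'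
      (hm _ (measurableSet_le hZ measurable_const)),
    setLIntegral_measure_zero _ _ (measure_nonpos_eq_zero_of_density (hm.trans hm') hZ hQ)]

theorem setLIntegral_ofReal_inv_mul_condExp_indicator_pos [IsFiniteMeasure P]
    {m' : MeasurableSpace Ω} (hm : m ≤ m') (hm' : m' ≤ m₀) {Z Z' : Ω → ℝ}
    (hZ : Measurable[m] Z) (hZ₀ : ∀ ω, 0 ≤ Z ω)
    (hZ' : Measurable[m'] Z') (hZ'₀ : ∀ ω, 0 ≤ Z' ω)
    (hQ : ∀ A, MeasurableSet[m] A → Q A = ∫⁻ ω in A, ENNReal.ofReal (Z ω) ∂P)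
    (hQ' : ∀ A, MeasurableSet[m'] A → Q A = ∫⁻ ω in A, ENNReal.ofReal (Z' ω) ∂P)
    {A : Set Ω} (hA : MeasurableSet[m] A) :
    ∫⁻ ω in A, ENNReal.ofReal
        ((Z ω)⁻¹ * P[{ω | 0 < Z' ω}.indicator (fun _ => (1 : ℝ)) | m] ω) ∂Q =
      P (A ∩ {ω | 0 < Z' ω}) := by
  set T := {ω | 0 < Z' ω}
  have hT : MeasurableSet[m₀] T := hm' _ (measurableSet_lt measurable_const hZ')
  have hsub : A ∩ T ∩ {ω | Z ω ≤ 0} ⊆ {ω | Z ω ≤ 0} ∩ T :=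
    fun _ h => ⟨h.2, h.1.2⟩
  rw [setLIntegral_ofReal_inv_mul_density (hm.trans hm') hZ hZ₀ hQ
      stronglyMeasurable_condExp.measurable hA,
    setLIntegral_ofReal_condExp_indicator (hm.trans hm') hT
      (hA.inter (measurableSet_lt measurable_const hZ)),
    ← measure_sdiff_null' (measure_mono_null hsub
      (measure_nonpos_inter_pos_eq_zero_of_density hm hm' hZ hZ' hZ'₀ hQ hQ'))]
  simp only [Set.sdiff_eq, Set.compl_ofPred, not_le]
  exact congrArg P (Set.inter_right_comm _ _ _)

theorem ae_eq_condExp_of_forall_setLIntegral_ofReal_eq {μ : Measure Ω} (hm : m ≤ m₀)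
    [SigmaFinite (μ.trim hm)] {f g : Ω → ℝ} (hf : Integrable f μ) (hf₀ : 0 ≤ᵐ[μ] f)
    (hgm : AEStronglyMeasurable[m] g μ) (hg₀ : 0 ≤ᵐ[μ] g)
    (hfg : ∀ A, MeasurableSet[m] A →
      ∫⁻ ω in A, ENNReal.ofReal (g ω) ∂μ = ∫⁻ ω in A, ENNReal.ofReal (f ω) ∂μ) :
    g =ᵐ[μ] μ[f | m] := by
  have hg : Integrable g μ := by
    refine ⟨hgm.mono hm, (hasFiniteIntegral_iff_ofReal hg₀).2 ?_⟩
    rw [← setLIntegral_univ, hfg _ .univ, setLIntegral_univ]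
    exact (hasFiniteIntegral_iff_ofReal hf₀).1 hf.2
  refine ae_eq_condExp_of_forall_setIntegral_eq hm hf (fun _ _ _ => hg.integrableOn)
    (fun A hA _ => ?_) hgm
  rw [integral_eq_lintegral_of_nonneg_ae (ae_restrict_of_ae hg₀) (hgm.mono hm).restrict,
    integral_eq_lintegral_of_nonneg_ae (ae_restrict_of_ae hf₀) hf.1.restrict, hfg A hA]

end MeasureTheory

theorem condexp_inv_density_general
    {Ω : Type*} {m : MeasurableSpace Ω}
    (ℱ : Filtration ℝ≥0 m)
    (P Q : Measure Ω) [IsProbabilityMeasure P] [IsProbabilityMeasure Q]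
    (Z : ℝ≥0 → Ω → ℝ)
    (hadapted : Adapted ℱ Z)
    (hnonneg : ∀ t ω, 0 ≤ Z t ω)
    (hdensity : ∀ t, ∀ A, MeasurableSet[ℱ t] A →
      Q A = ∫⁻ ω in A, ENNReal.ofReal (Z t ω) ∂P) :
    ∀ t s : ℝ≥0, ∀ᵐ ω ∂Q,
      (Q[fun ω' => (Z (t + s) ω')⁻¹ | ℱ t]) ω =
        (Z t ω)⁻¹ *
          (P[Set.indicator {ω' | 0 < Z (t + s) ω'} (fun _ => (1 : ℝ)) | ℱ t]) ω := by
  intro t s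
  have hmono : ℱ t ≤ ℱ (t + s) := ℱ.mono le_self_add
  have hinv₀ : ∀ ω, 0 ≤ (Z (t + s) ω)⁻¹ := fun ω => inv_nonneg.2 (hnonneg _ ω)
  set g := P[{ω | 0 < Z (t + s) ω}.indicator (fun _ => (1 : ℝ)) | ℱ t]
  have hgm : Measurable[ℱ t] g := stronglyMeasurable_condExp.measurable
  have hg₀ : 0 ≤ᵐ[Q] g := ae_of_ae_of_density (hdensity t)
    (measurableSet_le measurable_const hgm)
    (condExp_nonneg (ae_of_all _ (Set.indicator_nonneg fun _ _ => zero_le_one)))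
  have hrhs : ∀ A, MeasurableSet[ℱ t] A →
      ∫⁻ ω in A, ENNReal.ofReal (Z (t + s) ω)⁻¹ ∂Q = P (A ∩ {ω | 0 < Z (t + s) ω}) :=
    fun A hA => setLIntegral_ofReal_inv_density (ℱ.le _) (hadapted _) (hnonneg _)
      (hdensity _) (hmono _ hA)
  have hint : Integrable (fun ω => (Z (t + s) ω)⁻¹) Q := by
    refine ⟨((hadapted _).inv.mono (ℱ.le _) le_rfl).aestronglyMeasurable,
      (hasFiniteIntegral_iff_ofReal (ae_of_all _ hinv₀)).2 ?_⟩
    rw [← setLIntegral_univ, hrhs _ .univ]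
    exact measure_lt_top P _
  refine (ae_eq_condExp_of_forall_setLIntegral_ofReal_eq (ℱ.le t) hint (ae_of_all _ hinv₀)
    ((hadapted t).inv.mul hgm).aestronglyMeasurable
    (hg₀.mono fun ω hω => mul_nonneg (inv_nonneg.2 (hnonneg t ω)) hω)
    fun A hA => ?_).symm
  rw [hrhs A hA]
  exact setLIntegral_ofReal_inv_mul_condExp_indicator_pos hmono (ℱ.le _) (hadapted t)
    (hnonneg t) (hadapted _) (hnonneg _) (hdensity t) (hdensity _) hA

/-- For all `s, t ≥ 0`, `Q`-a.s.,
`E_Q[1/Z_{t+s} | ℱ_t] = (1/Z_t) · P(Z_{t+s} > 0 | ℱ_t)`, where `1/0 := 0`. -/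
theorem condexp_inv_density
    {Ω : Type*} {m : MeasurableSpace Ω}
    (ℱ : Filtration ℝ≥0 m)
    (P Q : Measure Ω) [IsProbabilityMeasure P] [IsProbabilityMeasure Q]
    (Z : ℝ≥0 → Ω → ℝ)
    (hadapted : Adapted ℱ Z)
    (hnonneg : ∀ t ω, 0 ≤ Z t ω)
    (hrc : ∀ ω t, ContinuousWithinAt (fun s => Z s ω) (Set.Ici t) t)
    (hdensity : ∀ t, ∀ A, MeasurableSet[ℱ t] A →
      Q A = ∫⁻ ω in A, ENNReal.ofReal (Z t ω) ∂P) :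
    ∀ t s : ℝ≥0, ∀ᵐ ω ∂Q,
      (Q[fun ω' => (Z (t + s) ω')⁻¹ | ℱ t]) ω =
        (Z t ω)⁻¹ *
          (P[Set.indicator {ω' | 0 < Z (t + s) ω'} (fun _ => (1 : ℝ)) | ℱ t]) ω :=
  condexp_inv_density_general ℱ P Q Z hadapted hnonneg hdensity
end

section
/- Under Q the limit superior of the density process is almost surely positive: Q(Z_∞ = 0) = 0, where Z_∞ := limsup_{t→∞} Z_t is taken as a [0,∞]-valued random variable. -/
open MeasureTheory Filter
open scoped NNReal ENNReal

/-!
If `Z_∞ = 0` then, for every `c > 0`, eventually `Z_n < c` along the integer times. The event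
`{Z_n < c}` lies in `ℱ_n`, so its `Q`-mass is `∫_{Z_n < c} Z_n dP ≤ c`, and Fatou's lemma for
sets bounds `Q(Z_∞ = 0)` by `c`.
-/

namespace MeasureTheory

variable {Ω : Type*} {m : MeasurableSpace Ω}

theorem measure_liminf_atTop_le_liminf_measure (μ : Measure Ω) (s : ℕ → Set Ω) :
    μ (liminf s atTop) ≤ liminf (fun n => μ (s n)) atTop := by
  have hmono : Monotone fun n => ⋂ i ≥ n, s i :=
    fun _ _ hnk => Set.biInter_mono (fun _ hi => le_trans hnk hi) fun _ _ => le_rfl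
  rw [liminf_eq_iSup_iInf_of_nat, liminf_eq_iSup_iInf_of_nat]
  simp only [Set.iSup_eq_iUnion, Set.iInf_eq_iInter]
  rw [hmono.measure_iUnion]
  exact iSup_mono fun n => le_iInf₂ fun i hi => measure_mono (Set.biInter_subset_of_mem hi)

theorem measure_le_mul_of_setLIntegral_eq {P Q : Measure Ω} {f : Ω → ℝ≥0∞} {A : Set Ω}
    {c : ℝ≥0∞} (hQ : Q A = ∫⁻ ω in A, f ω ∂P) (hf : ∀ ω ∈ A, f ω ≤ c) :
    Q A ≤ c * P A := by
  rw [hQ, ← setLIntegral_const]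
  exact setLIntegral_mono measurable_const hf

end MeasureTheory

theorem setOf_limsup_eq_zero_subset_liminf {Ω : Type*} (X : ℝ≥0 → Ω → ℝ≥0∞) {c : ℝ≥0∞}
    (hc : 0 < c) :
    {ω | limsup (fun t => X t ω) atTop = 0} ⊆
      liminf (fun n : ℕ => {ω | X n ω < c}) atTop := by
  intro ω hω
  rw [mem_liminf_iff_eventually_mem]
  have hlt : ∀ᶠ t in atTop, X t ω < c := eventually_lt_of_limsup_lt (hω.symm ▸ hc)
  exact tendsto_natCast_atTop_atTop.eventually hlt

theorem limsup_density_pos_under_Q_general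
    {Ω : Type*} {m : MeasurableSpace Ω}
    (ℱ : Filtration ℝ≥0 m)
    (P Q : Measure Ω) [IsProbabilityMeasure P]
    (Z : ℝ≥0 → Ω → ℝ)
    (hadapted : Adapted ℱ Z)
    (hdensity : ∀ t, ∀ A, MeasurableSet[ℱ t] A →
      Q A = ∫⁻ ω in A, ENNReal.ofReal (Z t ω) ∂P)
    (Zinf : Ω → ℝ≥0∞)
    (hZinf : ∀ ω, Zinf ω = Filter.limsup (fun t => ENNReal.ofReal (Z t ω)) Filter.atTop) :
    Q {ω | Zinf ω = 0} = 0 := by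
  set X : ℝ≥0 → Ω → ℝ≥0∞ := fun t ω => ENNReal.ofReal (Z t ω)
  refine nonpos_iff_eq_zero.mp (le_of_forall_gt_imp_ge_of_dense fun c hc => ?_)
  have hsmall : ∀ n : ℕ, Q {ω | X n ω < c} ≤ c := fun n =>
    have hmeas : MeasurableSet[ℱ n] {ω | X n ω < c} :=
      measurableSet_lt (hadapted n).ennreal_ofReal measurable_const
    calc Q {ω | X n ω < c}
        ≤ c * P {ω | X n ω < c} :=
          measure_le_mul_of_setLIntegral_eq (hdensity n _ hmeas) fun _ hω => le_of_lt hω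
      _ ≤ c := mul_le_of_le_one_right' prob_le_one
  calc Q {ω | Zinf ω = 0}
      ≤ Q (liminf (fun n : ℕ => {ω | X n ω < c}) atTop) :=
        measure_mono (by simpa only [hZinf] using setOf_limsup_eq_zero_subset_liminf X hc)
    _ ≤ liminf (fun n : ℕ => Q {ω | X n ω < c}) atTop :=
        measure_liminf_atTop_le_liminf_measure Q _
    _ ≤ c := liminf_le_of_frequently_le' (Frequently.of_forall hsmall)

/-- Under `Q` the limsup of the density process is a.s. positive:
`Q(Z_∞ = 0) = 0`, where `Z_∞ := limsup_{t→∞} Z_t` as a `[0,∞]`-valued random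
variable, and `F` is generated by `⋃ t, ℱ t`. -/
theorem limsup_density_pos_under_Q
    {Ω : Type*} {m : MeasurableSpace Ω}
    (ℱ : Filtration ℝ≥0 m)
    (hgen : (⨆ t, (ℱ t : MeasurableSpace Ω)) = m)
    (P Q : Measure Ω) [IsProbabilityMeasure P] [IsProbabilityMeasure Q]
    (Z : ℝ≥0 → Ω → ℝ)
    (hadapted : Adapted ℱ Z)
    (hnonneg : ∀ t ω, 0 ≤ Z t ω)
    (hrc : ∀ ω t, ContinuousWithinAt (fun s => Z s ω) (Set.Ici t) t)
    (hdensity : ∀ t, ∀ A, MeasurableSet[ℱ t] A →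
      Q A = ∫⁻ ω in A, ENNReal.ofReal (Z t ω) ∂P)
    (Zinf : Ω → ℝ≥0∞)
    (hZinf : ∀ ω, Zinf ω = Filter.limsup (fun t => ENNReal.ofReal (Z t ω)) Filter.atTop) :
    Q {ω | Zinf ω = 0} = 0 :=
  limsup_density_pos_under_Q_general ℱ P Q Z hadapted hdensity Zinf hZinf
end

section
/- If the family {1/Z_t : t ≥ 0} is uniformly integrable with respect to Q, then P(Z_∞ > 0) = P(Υ = ∞), where Z_∞ := limsup_{t→∞} Z_t and Υ := inf{s ≥ 0 : Z_s = 0} is the extinction time (with inf ∅ := ∞). -/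
/-!
Since `Z t` is the density of `Q` with respect to `P` on `ℱ t`, splitting according to the first
grid time at which `Z ≤ ε` and then the first later grid time at which `Z > δ` gives
`δ · P(Z crosses from below ε to above δ along a grid) ≤ ε`. Along the nested dyadic grids and by
right-continuity, a path that has hit zero and has `limsup Z > δ` makes such a crossing for every
`ε`, so `P(Υ < ∞, Z_∞ > 0) = 0`.

Conversely, on `{0 < Z t ≤ ε}` one has `P = E_Q[1/Z_t; ·]`, which uniform integrability makes small
uniformly in `t`; a path that never hits zero and has `Z_∞ = 0` eventually lies in these sets, so
`P(Υ = ∞, Z_∞ = 0) = 0`.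
-/

open MeasureTheory Filter Set
open scoped NNReal ENNReal Topology

theorem ENNReal.sInf_setOf_coe_eq_top_iff {p : ℝ≥0 → Prop} :
    sInf {s : ℝ≥0∞ | ∃ r : ℝ≥0, (r : ℝ≥0∞) = s ∧ p r} = ∞ ↔ ∀ r, ¬p r := by
  rw [sInf_eq_top]
  exact ⟨fun h r hr => coe_ne_top (h _ ⟨r, rfl, hr⟩), fun h _ ⟨r, _, hr⟩ => absurd hr (h r)⟩

theorem MeasureTheory.Filtration.measurableSet_disjointed {ι Ω : Type*} [Preorder ι]
    {m : MeasurableSpace Ω} (ℱ : Filtration ι m) {t : ℕ → ι} (ht : Monotone t) {s : ℕ → Set Ω}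
    (hs : ∀ j, MeasurableSet[ℱ (t j)] (s j)) (j : ℕ) : MeasurableSet[ℱ (t j)] (disjointed s j) := by
  rw [disjointed_eq_inter_compl]
  exact (hs j).inter <| .biInter (to_countable _) fun k hk =>
    (ℱ.mono (ht (le_of_lt hk)) _ (hs k)).compl

theorem exists_le_mem_disjointed {α : Type*} {s : ℕ → Set α} {i : ℕ} {x : α} (hx : x ∈ s i) :
    ∃ j ≤ i, x ∈ disjointed s j := by
  classical
  have h : ∃ j, x ∈ s j := ⟨i, hx⟩
  refine ⟨Nat.find h, Nat.find_min' h hx, ?_⟩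
  rw [disjointed_eq_inter_compl]
  simp only [mem_inter_iff, mem_iInter, mem_compl_iff]
  exact ⟨Nat.find_spec h, fun k hk => Nat.find_min h hk⟩

theorem MeasureTheory.measure_setOf_eventually_mem_le {ι α : Type*} [Preorder ι] [IsDirectedOrder ι]
    [Nonempty ι] [(atTop : Filter ι).IsCountablyGenerated] {m : MeasurableSpace α} {μ : Measure α}
    {s : ι → Set α} {c : ℝ≥0∞} (h : ∀ i, μ (s i) ≤ c) :
    μ {x | ∀ᶠ i in atTop, x ∈ s i} ≤ c := by
  have hmono : Monotone fun i => ⋂ j ≥ i, s j := fun i i' hii' =>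
    biInter_mono (fun j hj => hii'.trans hj) fun _ _ => le_rfl
  calc μ {x | ∀ᶠ i in atTop, x ∈ s i} = μ (⋃ i, ⋂ j ≥ i, s j) := by
        congr 1; ext x; simp [eventually_atTop]
    _ = ⨆ i, μ (⋂ j ≥ i, s j) := hmono.measure_iUnion
    _ ≤ c := iSup_le fun i => (measure_mono (biInter_subset_of_mem le_rfl)).trans (h i)

noncomputable def dyadic (n k : ℕ) : ℝ≥0 := k / 2 ^ n

theorem dyadic_add_mul_pow (n l k : ℕ) : dyadic (n + l) (k * 2 ^ l) = dyadic n k := by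
  unfold dyadic
  push_cast
  rw [pow_add, mul_div_mul_right _ _ (by positivity)]

theorem dyadic_strictMono (n : ℕ) : StrictMono (dyadic n) := fun _ _ h =>
  div_lt_div_of_pos_right (by exact_mod_cast h) (by positivity)

theorem exists_dyadic_mem_Ico {x y : ℝ≥0} (hxy : x < y) : ∃ n k, dyadic n k ∈ Ico x y := by
  obtain ⟨n, hn⟩ : ∃ n : ℕ, (y - x)⁻¹ < 2 ^ n := pow_unbounded_of_one_lt _ one_lt_two
  have hgap : 1 < (y - x) * 2 ^ n := by
    rwa [inv_lt_iff_one_lt_mul₀ (tsub_pos_of_lt hxy), mul_comm] at hn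
  refine ⟨n, ⌈x * 2 ^ n⌉₊, ?_, ?_⟩
  · rw [dyadic, le_div_iff₀ (by positivity)]
    exact Nat.le_ceil _
  · rw [dyadic, div_lt_iff₀ (by positivity)]
    calc (⌈x * 2 ^ n⌉₊ : ℝ≥0) < x * 2 ^ n + 1 := Nat.ceil_lt_add_one zero_le
      _ < x * 2 ^ n + (y - x) * 2 ^ n := by gcongr
      _ = y * 2 ^ n := by rw [← add_mul, add_tsub_cancel_of_le hxy.le]

theorem exists_dyadic_ge_mem {α : Type*} [TopologicalSpace α] {f : ℝ≥0 → α} {x : ℝ≥0}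
    (hf : ContinuousWithinAt f (Ici x) x) {U : Set α} (hU : U ∈ 𝓝 (f x)) :
    ∃ n k, x ≤ dyadic n k ∧ f (dyadic n k) ∈ U := by
  obtain ⟨y, hxy, hy⟩ := (nhdsGE_basis_Ico x).mem_iff.1 (hf hU)
  obtain ⟨n, k, hk⟩ := exists_dyadic_mem_Ico hxy
  exact ⟨n, k, hk.1, hy hk⟩

theorem exists_dyadic_crossing {f : ℝ≥0 → ℝ} (hf : ∀ t, ContinuousWithinAt f (Ici t) t)
    {r : ℝ≥0} {ε δ : ℝ} (hr : f r < ε)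
    (hδ : ENNReal.ofReal δ < limsup (fun t => ENNReal.ofReal (f t)) atTop) :
    ∃ n i j, i < j ∧ f (dyadic n i) ≤ ε ∧ δ < f (dyadic n j) := by
  obtain ⟨n₁, k₁, -, hq⟩ := exists_dyadic_ge_mem (hf r) (Iio_mem_nhds hr)
  obtain ⟨u, hqu, hu⟩ : ∃ u ≥ dyadic n₁ k₁ + 1, δ < f u := by
    obtain ⟨u, hqu, hu⟩ := frequently_atTop.1 (frequently_lt_of_lt_limsup (by isBoundedDefault) hδ)
      (dyadic n₁ k₁ + 1)
    exact ⟨u, hqu, (ENNReal.ofReal_lt_ofReal_iff'.1 hu).1⟩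
  obtain ⟨n₂, k₂, hur, hr'⟩ := exists_dyadic_ge_mem (hf u) (Ioi_mem_nhds hu)
  have hqr : dyadic n₁ k₁ < dyadic n₂ k₂ := by
    calc dyadic n₁ k₁ < dyadic n₁ k₁ + 1 := lt_add_one _
      _ ≤ dyadic n₂ k₂ := hqu.trans hur
  have hq' : dyadic (n₁ + n₂) (k₁ * 2 ^ n₂) = dyadic n₁ k₁ := dyadic_add_mul_pow _ _ _
  have hr'' : dyadic (n₁ + n₂) (k₂ * 2 ^ n₁) = dyadic n₂ k₂ := by
    rw [add_comm, dyadic_add_mul_pow]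
  rw [← hq', ← hr''] at hqr
  exact ⟨n₁ + n₂, _, _, (dyadic_strictMono _).lt_iff_lt.1 hqr, hq' ▸ hq.le, hr'' ▸ hr'⟩

def IsDensityProcess {ι Ω : Type*} [Preorder ι] {m : MeasurableSpace Ω} (ℱ : Filtration ι m)
    (P Q : Measure Ω) (Z : ι → Ω → ℝ) : Prop :=
  ∀ t, ∀ A, MeasurableSet[ℱ t] A → Q A = ∫⁻ ω in A, ENNReal.ofReal (Z t ω) ∂P

namespace IsDensityProcess

section Preorder

variable {ι Ω : Type*} [Preorder ι] {m : MeasurableSpace Ω} {ℱ : Filtration ι m}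
  {P Q : Measure Ω} {Z : ι → Ω → ℝ} {t : ι} {A : Set Ω}

theorem measure_le_mul (hd : IsDensityProcess ℱ P Q Z) (hA : MeasurableSet[ℱ t] A) {ε : ℝ}
    (h : ∀ ω ∈ A, Z t ω ≤ ε) : Q A ≤ ENNReal.ofReal ε * P A := by
  rw [hd t A hA, ← setLIntegral_const]
  exact setLIntegral_mono' (ℱ.le t _ hA) fun ω hω => ENNReal.ofReal_le_ofReal (h ω hω)

theorem mul_le_measure (hd : IsDensityProcess ℱ P Q Z) (hA : MeasurableSet[ℱ t] A) {δ : ℝ}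
    (h : ∀ ω ∈ A, δ ≤ Z t ω) : ENNReal.ofReal δ * P A ≤ Q A := by
  rw [hd t A hA, ← setLIntegral_const]
  exact setLIntegral_mono' (ℱ.le t _ hA) fun ω hω => ENNReal.ofReal_le_ofReal (h ω hω)

theorem trim_eq_withDensity (hd : IsDensityProcess ℱ P Q Z) (hZ : Adapted ℱ Z) (t : ι) :
    Q.trim (ℱ.le t) = (P.trim (ℱ.le t)).withDensity fun ω => ENNReal.ofReal (Z t ω) := by
  refine @Measure.ext _ (ℱ t) _ _ fun A hA => ?_
  rw [trim_measurableSet_eq _ hA, withDensity_apply _ hA, restrict_trim _ _ hA,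
    lintegral_trim _ (hZ t).ennreal_ofReal, hd t A hA]

theorem lintegral_eq_lintegral_mul (hd : IsDensityProcess ℱ P Q Z) (hZ : Adapted ℱ Z)
    {f : Ω → ℝ≥0∞} (hf : Measurable[ℱ t] f) :
    ∫⁻ ω, f ω ∂Q = ∫⁻ ω, f ω * ENNReal.ofReal (Z t ω) ∂P := by
  have hZt : Measurable[ℱ t] fun ω => ENNReal.ofReal (Z t ω) := (hZ t).ennreal_ofReal
  rw [← lintegral_trim (ℱ.le t) hf, hd.trim_eq_withDensity hZ,
    lintegral_withDensity_eq_lintegral_mul _ hZt hf, lintegral_trim (ℱ.le t) (hZt.mul hf)]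
  simp only [Pi.mul_apply, mul_comm]

theorem measure_eq_eLpNorm_indicator_inv (hd : IsDensityProcess ℱ P Q Z) (hZ : Adapted ℱ Z)
    (hA : MeasurableSet[ℱ t] A) (hpos : ∀ ω ∈ A, 0 < Z t ω) :
    P A = eLpNorm (A.indicator fun ω => (Z t ω)⁻¹) 1 Q := by
  have hf : Measurable[ℱ t] (A.indicator fun ω => ‖(Z t ω)⁻¹‖ₑ) :=
    (measurable_enorm.comp (measurable_inv.comp (hZ t))).indicator hA
  have hinv_mul : ∀ ω, A.indicator (fun ω => ‖(Z t ω)⁻¹‖ₑ) ω * ENNReal.ofReal (Z t ω)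
      = A.indicator 1 ω := by
    intro ω
    by_cases hω : ω ∈ A
    · have hZω := hpos ω hω
      rw [indicator_of_mem hω, indicator_of_mem hω, Real.enorm_eq_ofReal (inv_nonneg.2 hZω.le),
        ← ENNReal.ofReal_mul (inv_nonneg.2 hZω.le), inv_mul_cancel₀ hZω.ne', ENNReal.ofReal_one,
        Pi.one_apply]
    · simp [hω]
  rw [eLpNorm_one_eq_lintegral_enorm]
  simp_rw [enorm_indicator_eq_indicator_enorm]
  rw [hd.lintegral_eq_lintegral_mul hZ hf, lintegral_congr hinv_mul,
    lintegral_indicator_one (ℱ.le t _ hA)]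

theorem exists_pos_forall_measure_Ioc_le [IsProbabilityMeasure P] (hd : IsDensityProcess ℱ P Q Z)
    (hZ : Adapted ℱ Z) (hUI : UnifIntegrable (fun t ω => (Z t ω)⁻¹) 1 Q) {η : ℝ} (hη : 0 < η) :
    ∃ ε > 0, ∀ t, P (Z t ⁻¹' Ioc 0 ε) ≤ ENNReal.ofReal η := by
  obtain ⟨ε, hε, hsmall⟩ := hUI hη
  refine ⟨ε, hε, fun t => ?_⟩
  have hA : MeasurableSet[ℱ t] (Z t ⁻¹' Ioc 0 ε) := (hZ t) measurableSet_Ioc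
  have hQ : Q (Z t ⁻¹' Ioc 0 ε) ≤ ENNReal.ofReal ε :=
    calc Q (Z t ⁻¹' Ioc 0 ε) ≤ ENNReal.ofReal ε * P (Z t ⁻¹' Ioc 0 ε) :=
          hd.measure_le_mul hA fun ω hω => hω.2
      _ ≤ ENNReal.ofReal ε := mul_le_of_le_one_right' prob_le_one
  rw [hd.measure_eq_eLpNorm_indicator_inv hZ hA fun ω hω => hω.1]
  exact hsmall t _ (ℱ.le t _ hA) hQ

-- Split according to the first `j` with `δ < Z (t j)`: that piece lies in `ℱ (t j)`.
theorem mul_measure_inter_iUnion_lt_le (hd : IsDensityProcess ℱ P Q Z) (hZ : Adapted ℱ Z) {s : ι}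
    {t : ℕ → ι} (ht : Monotone t) (hst : ∀ j, s ≤ t j) (hA : MeasurableSet[ℱ s] A) (δ : ℝ) :
    ENNReal.ofReal δ * P (A ∩ ⋃ j, Z (t j) ⁻¹' Ioi δ) ≤ Q A := by
  set C : ℕ → Set Ω := disjointed fun j => A ∩ Z (t j) ⁻¹' Ioi δ
  have hC : ∀ j, MeasurableSet[ℱ (t j)] (C j) := ℱ.measurableSet_disjointed ht
    fun j => (ℱ.mono (hst j) _ hA).inter (hZ (t j) measurableSet_Ioi)
  calc ENNReal.ofReal δ * P (A ∩ ⋃ j, Z (t j) ⁻¹' Ioi δ)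
      = ENNReal.ofReal δ * P (⋃ j, C j) := by rw [inter_iUnion, iUnion_disjointed]
    _ ≤ ∑' j, ENNReal.ofReal δ * P (C j) := by
        rw [ENNReal.tsum_mul_left]; gcongr; exact measure_iUnion_le _
    _ ≤ ∑' j, Q (C j) := ENNReal.tsum_le_tsum fun j =>
        hd.mul_le_measure (hC j) fun ω hω => (disjointed_subset _ _ hω).2.le
    _ = Q (⋃ j, C j) := (measure_iUnion (disjoint_disjointed _) fun j => ℱ.le _ _ (hC j)).symm
    _ ≤ Q A :=
        measure_mono <| iUnion_subset fun j => (disjointed_subset _ j).trans inter_subset_left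

theorem mul_measure_exists_le_lt_le [IsProbabilityMeasure P] (hd : IsDensityProcess ℱ P Q Z)
    (hZ : Adapted ℱ Z) {t : ℕ → ι} (ht : Monotone t) (ε δ : ℝ) :
    ENNReal.ofReal δ * P {ω | ∃ i j, i < j ∧ Z (t i) ω ≤ ε ∧ δ < Z (t j) ω}
      ≤ ENNReal.ofReal ε := by
  set B : ℕ → Set Ω := disjointed fun i => Z (t i) ⁻¹' Iic ε
  have hB : ∀ i, MeasurableSet[ℱ (t i)] (B i) :=
    ℱ.measurableSet_disjointed ht fun i => hZ (t i) measurableSet_Iic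
  have hcover : {ω | ∃ i j, i < j ∧ Z (t i) ω ≤ ε ∧ δ < Z (t j) ω}
      ⊆ ⋃ i, B i ∩ ⋃ k, Z (t (i + k + 1)) ⁻¹' Ioi δ := by
    rintro ω ⟨i, j, hij, hi, hj⟩
    obtain ⟨i₀, hi₀, hωi₀⟩ := exists_le_mem_disjointed (s := fun i => Z (t i) ⁻¹' Iic ε) hi
    obtain ⟨k, rfl⟩ := Nat.exists_eq_add_of_lt (hi₀.trans_lt hij)
    exact mem_iUnion.2 ⟨i₀, hωi₀, mem_iUnion.2 ⟨k, hj⟩⟩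
  calc ENNReal.ofReal δ * P {ω | ∃ i j, i < j ∧ Z (t i) ω ≤ ε ∧ δ < Z (t j) ω}
      ≤ ∑' i, ENNReal.ofReal δ * P (B i ∩ ⋃ k, Z (t (i + k + 1)) ⁻¹' Ioi δ) := by
        rw [ENNReal.tsum_mul_left]; gcongr
        exact (measure_mono hcover).trans (measure_iUnion_le _)
    _ ≤ ∑' i, Q (B i) := ENNReal.tsum_le_tsum fun i =>
        hd.mul_measure_inter_iUnion_lt_le hZ (fun a b h => ht (by omega)) (fun k => ht (by omega))
          (hB i) δ
    _ ≤ ∑' i, ENNReal.ofReal ε * P (B i) := ENNReal.tsum_le_tsum fun i =>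
        hd.measure_le_mul (hB i) fun ω hω => (disjointed_subset _ i hω : ω ∈ Z (t i) ⁻¹' Iic ε)
    _ = ENNReal.ofReal ε * P (⋃ i, B i) := by
        rw [ENNReal.tsum_mul_left, measure_iUnion (disjoint_disjointed _) fun i => ℱ.le _ _ (hB i)]
    _ ≤ ENNReal.ofReal ε := mul_le_of_le_one_right' prob_le_one

end Preorder

section NNReal

variable {Ω : Type*} {m : MeasurableSpace Ω} {ℱ : Filtration ℝ≥0 m} {P Q : Measure Ω}
  {Z : ℝ≥0 → Ω → ℝ}

theorem mul_measure_exists_dyadic_crossing_le [IsProbabilityMeasure P]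
    (hd : IsDensityProcess ℱ P Q Z) (hZ : Adapted ℱ Z) (ε δ : ℝ) :
    ENNReal.ofReal δ * P {ω | ∃ n i j, i < j ∧ Z (dyadic n i) ω ≤ ε ∧ δ < Z (dyadic n j) ω}
      ≤ ENNReal.ofReal ε := by
  have hmono : Monotone fun n =>
      {ω | ∃ i j, i < j ∧ Z (dyadic n i) ω ≤ ε ∧ δ < Z (dyadic n j) ω} := by
    refine monotone_nat_of_le_succ fun n ω ⟨i, j, hij, hi, hj⟩ =>
      ⟨i * 2 ^ 1, j * 2 ^ 1, by omega, ?_, ?_⟩ <;> rwa [dyadic_add_mul_pow]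
  rw [ofPred_exists, hmono.measure_iUnion, ENNReal.mul_iSup]
  exact iSup_le fun n => hd.mul_measure_exists_le_lt_le hZ (dyadic_strictMono n).monotone ε δ

theorem measure_forall_dyadic_crossing_eq_zero [IsProbabilityMeasure P]
    (hd : IsDensityProcess ℱ P Q Z) (hZ : Adapted ℱ Z) {δ : ℝ} (hδ : 0 < δ) :
    P {ω | ∀ ε : ℝ, 0 < ε →
      ∃ n i j, i < j ∧ Z (dyadic n i) ω ≤ ε ∧ δ < Z (dyadic n j) ω} = 0 := by
  suffices ENNReal.ofReal δ * P {ω | ∀ ε : ℝ, 0 < ε →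
      ∃ n i j, i < j ∧ Z (dyadic n i) ω ≤ ε ∧ δ < Z (dyadic n j) ω} = 0 from
    (mul_eq_zero.1 this).resolve_left (ENNReal.ofReal_pos.2 hδ).ne'
  refine le_antisymm (ENNReal.le_of_forall_pos_le_add fun ε hε _ => ?_) zero_le
  rw [zero_add, ← ENNReal.ofReal_coe_nnreal]
  refine le_trans ?_ (hd.mul_measure_exists_dyadic_crossing_le hZ ε δ)
  gcongr
  exact fun hω => hω ε hε

theorem measure_exists_eq_zero_limsup_pos [IsProbabilityMeasure P]
    (hd : IsDensityProcess ℱ P Q Z) (hZ : Adapted ℱ Z)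
    (hrc : ∀ ω t, ContinuousWithinAt (fun s => Z s ω) (Ici t) t) :
    P {ω | (∃ r, Z r ω = 0) ∧ 0 < limsup (fun t => ENNReal.ofReal (Z t ω)) atTop} = 0 := by
  refine measure_mono_null (fun ω ⟨⟨r, hr⟩, hpos⟩ => ?_) <| measure_iUnion_null fun q : ℚ =>
    measure_iUnion_null fun hq : 0 < q =>
      hd.measure_forall_dyadic_crossing_eq_zero hZ (Rat.cast_pos.2 hq)
  obtain ⟨q, -, hq0, hq⟩ := ENNReal.lt_iff_exists_rat_btwn.1 hpos
  exact mem_iUnion₂.2 ⟨q, by simpa using hq0,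
    fun ε hε => exists_dyadic_crossing (hrc ω) (hr ▸ hε) hq⟩

theorem measure_forall_ne_zero_limsup_eq_zero [IsProbabilityMeasure P]
    (hd : IsDensityProcess ℱ P Q Z) (hZ : Adapted ℱ Z) (hnonneg : ∀ t ω, 0 ≤ Z t ω)
    (hUI : UnifIntegrable (fun t ω => (Z t ω)⁻¹) 1 Q) :
    P {ω | (∀ t, Z t ω ≠ 0) ∧ limsup (fun t => ENNReal.ofReal (Z t ω)) atTop = 0} = 0 := by
  refine le_antisymm (ENNReal.le_of_forall_pos_le_add fun η hη _ => ?_) zero_le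
  obtain ⟨ε, hε, hsmall⟩ := hd.exists_pos_forall_measure_Ioc_le hZ hUI (NNReal.coe_pos.2 hη)
  rw [zero_add, ← ENNReal.ofReal_coe_nnreal]
  refine (measure_mono ?_).trans (measure_setOf_eventually_mem_le hsmall)
  rintro ω ⟨hne, hlim⟩
  filter_upwards [eventually_lt_of_limsup_lt (hlim ▸ ENNReal.ofReal_pos.2 hε)] with t ht
  exact ⟨(hnonneg t ω).lt_of_ne' (hne t), ((ENNReal.ofReal_lt_ofReal_iff hε).1 ht).le⟩

end NNReal

end IsDensityProcess

theorem ui_implies_extinction_identity_general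
    {Ω : Type*} {m : MeasurableSpace Ω}
    (ℱ : Filtration ℝ≥0 m)
    (P Q : Measure Ω) [IsProbabilityMeasure P]
    (Z : ℝ≥0 → Ω → ℝ)
    (hadapted : Adapted ℱ Z)
    (hnonneg : ∀ t ω, 0 ≤ Z t ω)
    (hrc : ∀ ω t, ContinuousWithinAt (fun s => Z s ω) (Set.Ici t) t)
    (hdensity : ∀ t, ∀ A, MeasurableSet[ℱ t] A →
      Q A = ∫⁻ ω in A, ENNReal.ofReal (Z t ω) ∂P)
    (Zinf : Ω → ℝ≥0∞)
    (hZinf : ∀ ω, Zinf ω = Filter.limsup (fun t => ENNReal.ofReal (Z t ω)) Filter.atTop)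
    (Υ : Ω → ℝ≥0∞)
    (hΥ : ∀ ω, Υ ω = sInf {s : ℝ≥0∞ | ∃ r : ℝ≥0, (r : ℝ≥0∞) = s ∧ Z r ω = 0})
    (hUI : UniformIntegrable (fun (t : ℝ≥0) ω => (Z t ω)⁻¹) 1 Q) :
    P {ω | 0 < Zinf ω} = P {ω | Υ ω = ∞} := by
  have hd : IsDensityProcess ℱ P Q Z := hdensity
  have hΥ_top : ∀ ω, Υ ω = ∞ ↔ ∀ t, Z t ω ≠ 0 := fun ω => by
    rw [hΥ, ENNReal.sInf_setOf_coe_eq_top_iff]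
  refine measure_congr (ae_eq_set.2 ⟨?_, ?_⟩)
  · refine measure_mono_null (fun ω ⟨hpos, hext⟩ => ?_)
      (hd.measure_exists_eq_zero_limsup_pos hadapted hrc)
    simp only [mem_ofPred_eq, hΥ_top, not_forall, not_not] at hpos hext
    exact ⟨hext, hZinf ω ▸ hpos⟩
  · refine measure_mono_null (fun ω ⟨hext, hpos⟩ => ?_)
      (hd.measure_forall_ne_zero_limsup_eq_zero hadapted hnonneg hUI.2.1)
    simp only [mem_ofPred_eq, hΥ_top, not_lt, nonpos_iff_eq_zero] at hpos hext
    exact ⟨hext, hZinf ω ▸ hpos⟩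

/-- If the family `{1/Z_t : t ≥ 0}` is uniformly integrable with
respect to `Q`, then `P(Z_∞ > 0) = P(Υ = ∞)`, where `Z_∞ := limsup_{t→∞} Z_t`
and `Υ := inf {s ≥ 0 : Z_s = 0}` (with `inf ∅ := ∞`). -/
theorem ui_implies_extinction_identity
    {Ω : Type*} {m : MeasurableSpace Ω}
    (ℱ : Filtration ℝ≥0 m)
    (hgen : (⨆ t, (ℱ t : MeasurableSpace Ω)) = m)
    (P Q : Measure Ω) [IsProbabilityMeasure P] [IsProbabilityMeasure Q]
    (Z : ℝ≥0 → Ω → ℝ)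
    (hadapted : Adapted ℱ Z)
    (hnonneg : ∀ t ω, 0 ≤ Z t ω)
    (hrc : ∀ ω t, ContinuousWithinAt (fun s => Z s ω) (Set.Ici t) t)
    (hdensity : ∀ t, ∀ A, MeasurableSet[ℱ t] A →
      Q A = ∫⁻ ω in A, ENNReal.ofReal (Z t ω) ∂P)
    (Zinf : Ω → ℝ≥0∞)
    (hZinf : ∀ ω, Zinf ω = Filter.limsup (fun t => ENNReal.ofReal (Z t ω)) Filter.atTop)
    (Υ : Ω → ℝ≥0∞)
    (hΥ : ∀ ω, Υ ω = sInf {s : ℝ≥0∞ | ∃ r : ℝ≥0, (r : ℝ≥0∞) = s ∧ Z r ω = 0})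
    (hUI : UniformIntegrable (fun (t : ℝ≥0) ω => (Z t ω)⁻¹) 1 Q) :
    P {ω | 0 < Zinf ω} = P {ω | Υ ω = ∞} :=
  ui_implies_extinction_identity_general ℱ P Q Z hadapted hnonneg hrc hdensity Zinf hZinf Υ hΥ hUI
end
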